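/- arXiv:1912.06134 — 2 statements merged into one kernel-verified Lean document; each statement's English description precedes it below -/
import Mathlib

section
/- Let p and q = p + 2 be twin odd primes with q ≡ 3 (mod 4). Then gcd((p−1)²·(q+1)/4 + p, 2^{pq} − 1) = 1; equivalently, no prime divisor r of 2^{pq} − 1 divides (p−1)²(q+1)/4 + p. -/
open Finset

/-- `ξ_N = exp(2πi/N)`, a primitive `N`-th root of unity. -/
noncomputable def DHxi (N : ℕ) : ℂ := Complex.exp (2 * Real.pi * Complex.I / N)

/-- Gauss period: `Σ_{a ∈ D} ξ_N^a`. -/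
noncomputable def DHeta (N : ℕ) (D : Finset (ZMod N)) : ℂ := ∑ a ∈ D, DHxi N ^ a.val

/-- Ding–Helleseth generalized cyclotomic class
`D₀ = {g^(2t) x^i : 0 ≤ t ≤ e/2 - 1, i ∈ {0,1}}` in `ZMod (p*q)`, where `e = (p-1)(q-1)/2`. -/
def DHD0 (p q g x : ℕ) : Finset (ZMod (p * q)) :=
  (Finset.range ((p - 1) * (q - 1) / 4) ×ˢ Finset.range 2).image
    (fun ti => (g : ZMod (p * q)) ^ (2 * ti.1) * (x : ZMod (p * q)) ^ ti.2)

/-- `D₁ = g · D₀`. -/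
def DHD1 (p q g x : ℕ) : Finset (ZMod (p * q)) :=
  (DHD0 p q g x).image (fun d => (g : ZMod (p * q)) * d)

/-- `P = {p, 2p, …, (q-1)p}` as a subset of `ZMod (p*q)`. -/
def DHP (p q : ℕ) : Finset (ZMod (p * q)) :=
  (Finset.Icc 1 (q - 1)).image (fun k => ((k * p : ℕ) : ZMod (p * q)))

/-- `Q = {q, 2q, …, (p-1)q}` as a subset of `ZMod (p*q)`. -/
def DHQ (p q : ℕ) : Finset (ZMod (p * q)) :=
  (Finset.Icc 1 (p - 1)).image (fun k => ((k * q : ℕ) : ZMod (p * q)))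

/-- First Ding–Helleseth sequence: `s_i = 1` iff `i mod N ∈ D₁ ∪ P`. -/
def DHs1 (p q g x : ℕ) (i : ℕ) : ℕ :=
  if (i : ZMod (p * q)) ∈ DHD1 p q g x ∪ DHP p q then 1 else 0

/-- Second Ding–Helleseth sequence: `s_i = 1` iff `i mod N ∈ D₁ ∪ Q`. -/
def DHs2 (p q g x : ℕ) (i : ℕ) : ℕ :=
  if (i : ZMod (p * q)) ∈ DHD1 p q g x ∪ DHQ p q then 1 else 0

/-- Circulant matrix of the first sequence: `a_{i,j} = s_{(i-j) mod N}`. -/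
noncomputable def DHA1 (p q g x : ℕ) : Matrix (Fin (p * q)) (Fin (p * q)) ℂ :=
  fun i j => (DHs1 p q g x ((((i : ℕ) : ZMod (p * q)) - ((j : ℕ) : ZMod (p * q))).val) : ℂ)

/-- Circulant matrix of the second sequence: `a_{i,j} = s_{(i-j) mod N}`. -/
noncomputable def DHA2 (p q g x : ℕ) : Matrix (Fin (p * q)) (Fin (p * q)) ℂ :=
  fun i j => (DHs2 p q g x ((((i : ℕ) : ZMod (p * q)) - ((j : ℕ) : ZMod (p * q))).val) : ℂ)

/-- `S(z) = Σ_{i=0}^{N-1} s_i z^i` for the first sequence. -/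
noncomputable def DHSval1 (p q g x : ℕ) (z : ℂ) : ℂ :=
  ∑ i ∈ Finset.range (p * q), (DHs1 p q g x i : ℂ) * z ^ i

/-- `S(z) = Σ_{i=0}^{N-1} s_i z^i` for the second sequence. -/
noncomputable def DHSval2 (p q g x : ℕ) (z : ℂ) : ℂ :=
  ∑ i ∈ Finset.range (p * q), (DHs2 p q g x i : ℂ) * z ^ i

/-- `S(2) = Σ_{i=0}^{N-1} s_i 2^i` for the first sequence, as a natural number. -/
def DHS2num1 (p q g x : ℕ) : ℕ := ∑ i ∈ Finset.range (p * q), DHs1 p q g x i * 2 ^ i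

/-- `S(2) = Σ_{i=0}^{N-1} s_i 2^i` for the second sequence, as a natural number. -/
def DHS2num2 (p q g x : ℕ) : ℕ := ∑ i ∈ Finset.range (p * q), DHs2 p q g x i * 2 ^ i

/-- Nonzero quadratic residues modulo `q`. -/
def DHQR (q : ℕ) [NeZero q] : Finset (ZMod q) :=
  Finset.univ.filter (fun a => a ≠ 0 ∧ ∃ b : ZMod q, b * b = a)

/-- Quadratic nonresidues modulo `q`. -/
def DHQNR (q : ℕ) [NeZero q] : Finset (ZMod q) :=
  Finset.univ.filter (fun a => a ≠ 0 ∧ ¬∃ b : ZMod q, b * b = a)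


/-- Auxiliary Diophantine lemma for the case of a prime divisor `r ≡ 1 (mod 2p)`. -/
lemma DHcase1_aux (p a b : ℤ) (hp : 5 ≤ p) (hodd : p % 2 = 1)
    (ha : 1 ≤ a) (hb : 0 ≤ b)
    (E : (2*p*a+1)*(2*p*b+(p+3)) = p^3+p^2-p+3) : False := by
  have hp0 : p ≠ 0 := by omega
  have E2 : 4*p*a*b + 2*p*a + 6*a + 2*b = p^2 + p - 2 :=
    mul_left_cancel₀ hp0 (by linear_combination E)
  have hpt : p * (p + 1 - 4*a*b - 2*a) = 6*a + 2*b + 2 := by linear_combination -E2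
  have ht1 : 1 ≤ p + 1 - 4*a*b - 2*a := by
    by_contra h
    push_neg at h
    have h0 : p + 1 - 4*a*b - 2*a ≤ 0 := by linarith
    have h2 : p * (p + 1 - 4*a*b - 2*a) ≤ p * 0 :=
      mul_le_mul_of_nonneg_left h0 (by linarith)
    nlinarith [hpt]
  have hev : Even (p + 1 - 4*a*b - 2*a) := by
    have hmul : Even (p * (p + 1 - 4*a*b - 2*a)) := ⟨3*a+b+1, by linarith [hpt]⟩
    rcases Int.even_mul.mp hmul with h | h
    · exact absurd (Int.even_iff.mp h) (by omega)
    · exact h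
  obtain ⟨c, hc⟩ := hev
  have hc1 : 1 ≤ c := by
    have h2c : 1 ≤ c + c := by linarith
    omega
  have hII2 : 2*(3*a+b+1) = 2*(p*c) := by linear_combination -hpt + p*hc
  have hII : 3*a+b+1 = p*c := by linarith
  have hI : p + 1 = 4*a*b + 2*a + 2*c := by linarith [hc]
  rcases (show c = 1 ∨ 2 ≤ c by omega) with hc2 | hc2
  · subst hc2
    have hab : a + b = 4*(a*b) := by nlinarith [hII, hI]
    rcases (show b = 0 ∨ 1 ≤ b by omega) with hb0 | hb1
    · subst hb0
      nlinarith [hab]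
    · have k1 : 0 ≤ (a-1)*b := mul_nonneg (by linarith) (by linarith)
      have k2 : 0 ≤ a*(b-1) := mul_nonneg (by linarith) (by linarith)
      nlinarith [hab, k1, k2]
  · have k1 : 0 ≤ p*(c-2) := mul_nonneg (by linarith) (by linarith)
    have k2 : 0 ≤ (a-1)*b := mul_nonneg (by linarith) hb
    nlinarith [hII, hI, k1, k2]

/-- Auxiliary Diophantine lemma for the case of a prime divisor `r ≡ 1 (mod 2q)`. -/
lemma DHcase2_aux (q a b : ℤ) (hq : 7 ≤ q) (hodd : q % 2 = 1)
    (ha : 1 ≤ a) (hb : 0 ≤ b) (h11 : q ≠ 11) (h15 : q ≠ 15) (h17 : q ≠ 17)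
    (E : (2*q*a+1)*(2*q*b+(q+1)) = q^3 - 5*q^2 + 7*q + 1) : False := by
  have hq0 : q ≠ 0 := by omega
  have E2 : 4*q*a*b + 2*q*a + 2*a + 2*b = q^2 - 5*q + 6 :=
    mul_left_cancel₀ hq0 (by linear_combination E)
  have hqt : q * (q - 5 - 4*a*b - 2*a) = 2*a + 2*b - 6 := by linear_combination -E2
  have ht0 : 0 ≤ q - 5 - 4*a*b - 2*a := by
    by_contra h
    push_neg at h
    have h1 : q - 5 - 4*a*b - 2*a ≤ -1 := by linarith [Int.add_one_le_iff.mpr h]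
    have h2 : q * (q - 5 - 4*a*b - 2*a) ≤ q * (-1) :=
      mul_le_mul_of_nonneg_left h1 (by linarith)
    nlinarith [hqt]
  have hev : Even (q - 5 - 4*a*b - 2*a) := by
    have hmul : Even (q * (q - 5 - 4*a*b - 2*a)) := ⟨a+b-3, by linarith [hqt]⟩
    rcases Int.even_mul.mp hmul with h | h
    · exact absurd (Int.even_iff.mp h) (by omega)
    · exact h
  obtain ⟨d, hd⟩ := hev
  have hd0 : 0 ≤ d := by
    by_contra h
    push_neg at h
    linarith [ht0, hd]
  have hI : q - 5 = 4*a*b + 2*a + 2*d := by linarith [hd]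
  have hII2 : 2*(a+b-3) = 2*(q*d) := by linear_combination -hqt + q*hd
  have hII : a + b - 3 = q*d := by linarith
  rcases (show d = 0 ∨ 1 ≤ d by omega) with hd1 | hd1
  · subst hd1
    have hab3 : a + b = 3 := by nlinarith [hII]
    rcases (show a = 1 ∨ a = 2 ∨ a = 3 by omega) with h | h | h
    · subst h
      have hb2 : b = 2 := by omega
      subst hb2
      apply h15
      nlinarith [hI]
    · subst h
      have hb2 : b = 1 := by omega
      subst hb2
      apply h17
      nlinarith [hI]
    · subst h
      have hb2 : b = 0 := by omega
      subst hb2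
      apply h11
      nlinarith [hI]
  · have hqd : q ≤ q*d := by
      have h1 : 0 ≤ q*(d-1) := mul_nonneg (by linarith) (by linarith)
      nlinarith [h1]
    have k1 : 0 ≤ (a-1)*b := mul_nonneg (by linarith) hb
    nlinarith [hI, hII, hqd, k1]

theorem stmt17 (p q : ℕ) (hp : Nat.Prime p) (hq : Nat.Prime q)
    (hpo : Odd p) (hqo : Odd q) (htwin : q = p + 2) (h3 : q % 4 = 3) :
    Nat.gcd ((p - 1) ^ 2 * (q + 1) / 4 + p) (2 ^ (p * q) - 1) = 1 := by
  have hp5 : 5 ≤ p := by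
    have h2 := hp.two_le
    omega
  obtain ⟨k, hk⟩ := hpo
  have hq7 : 7 ≤ q := by omega
  have hA : (p - 1) ^ 2 * (q + 1) / 4 + p = k^2*(q+1) + p := by
    have h1 : p - 1 = 2*k := by omega
    rw [h1, show (2*k)^2*(q+1) = 4*(k^2*(q+1)) by ring,
      Nat.mul_div_cancel_left _ (by norm_num : 0 < 4)]
  rw [hA]
  by_contra hg
  obtain ⟨r, hrp, hrdvd⟩ := Nat.exists_prime_and_dvd hg
  have hrA : r ∣ k^2*(q+1) + p := hrdvd.trans (Nat.gcd_dvd_left _ _)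
  have hrM : r ∣ 2 ^ (p * q) - 1 := hrdvd.trans (Nat.gcd_dvd_right _ _)
  have hM1 : 1 ≤ 2 ^ (p*q) := Nat.one_le_two_pow
  have hpq0 : p * q ≠ 0 := by positivity
  have hrodd : r % 2 = 1 := by
    rcases hrp.eq_two_or_odd with h2 | h2
    · subst h2
      have hdvd2 : 2 ∣ 2 ^ (p*q) := dvd_pow_self 2 hpq0
      omega
    · exact h2
  have hr3 : 3 ≤ r := by
    have := hrp.two_le
    omega
  haveI : Fact r.Prime := ⟨hrp⟩
  have hr2 : (2 : ZMod r) ≠ 0 := by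
    intro h0
    have h1 : ((2:ℕ) : ZMod r) = 0 := by exact_mod_cast h0
    have h2 : r ∣ 2 := (ZMod.natCast_eq_zero_iff 2 r).mp h1
    have := Nat.le_of_dvd (by norm_num) h2
    omega
  have hpow : (2 : ZMod r)^(p*q) = 1 := by
    have hmod : 1 ≡ 2 ^ (p*q) [MOD r] := (Nat.modEq_iff_dvd' hM1).mpr hrM
    have hcast := (ZMod.natCast_eq_natCast_iff _ _ _).mpr hmod.symm
    push_cast at hcast
    exact hcast
  have hdvd_pq : orderOf (2 : ZMod r) ∣ p*q := orderOf_dvd_of_pow_eq_one hpow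
  have hd1 : orderOf (2 : ZMod r) ≠ 1 := by
    intro h1
    have h2 : (2 : ZMod r) = 1 := orderOf_eq_one_iff.mp h1
    have h3' : (1 : ZMod r) = 0 := by
      calc (1 : ZMod r) = 2 - 1 := by norm_num
        _ = 1 - 1 := by rw [h2]
        _ = 0 := sub_self 1
    exact one_ne_zero h3'
  have hdr : orderOf (2 : ZMod r) ∣ r - 1 := ZMod.orderOf_dvd_card_sub_one hr2
  have hpq_dvd : p ∣ r - 1 ∨ q ∣ r - 1 := by
    by_contra hcon
    push_neg at hcon
    obtain ⟨h1, h2⟩ := hcon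
    have hp_nd : ¬ p ∣ orderOf (2 : ZMod r) := fun h => h1 (h.trans hdr)
    have hq_nd : ¬ q ∣ orderOf (2 : ZMod r) := fun h => h2 (h.trans hdr)
    have c1 : Nat.Coprime p (orderOf (2 : ZMod r)) := (hp.coprime_iff_not_dvd).mpr hp_nd
    have c2 : Nat.Coprime q (orderOf (2 : ZMod r)) := (hq.coprime_iff_not_dvd).mpr hq_nd
    have c3 : Nat.gcd (p*q) (orderOf (2 : ZMod r)) = 1 := Nat.Coprime.mul c1 c2
    have h4 : orderOf (2 : ZMod r) ∣ Nat.gcd (p*q) (orderOf (2 : ZMod r)) :=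
      Nat.dvd_gcd hdvd_pq dvd_rfl
    rw [c3] at h4
    exact hd1 (Nat.dvd_one.mp h4)
  -- common integer facts
  have hpz : (5:ℤ) ≤ (p:ℤ) := by exact_mod_cast hp5
  have hpk : (p:ℤ) = 2*(k:ℤ)+1 := by exact_mod_cast hk
  have hqp : (q:ℤ) = (p:ℤ)+2 := by exact_mod_cast htwin
  obtain ⟨m, hm⟩ := hrA
  have hmz : ((k:ℤ)^2*((q:ℤ)+1)+(p:ℤ)) = (r:ℤ)*(m:ℤ) := by exact_mod_cast hm
  have hm0 : (0:ℤ) ≤ (m:ℤ) := Int.natCast_nonneg m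
  have h2dvd : 2 ∣ r - 1 := by omega
  rcases hpq_dvd with hcase | hcase
  · -- p ∣ r - 1
    have hcop : Nat.Coprime 2 p := (Nat.prime_two.coprime_iff_not_dvd).mpr (by omega)
    obtain ⟨a, haeq⟩ := hcop.mul_dvd_of_dvd_of_dvd h2dvd hcase
    have ha1 : 1 ≤ a := by
      rcases Nat.eq_zero_or_pos a with h | h
      · subst h
        simp at haeq
        omega
      · exact h
    have haz : (r:ℤ) = 2*(p:ℤ)*(a:ℤ)+1 := by
      have h1 : ((r:ℤ) - 1) = 2*(p:ℤ)*(a:ℤ) := by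
        have h2 : (r : ℤ) - 1 = ((r - 1 : ℕ) : ℤ) := by
          have := hrp.one_lt.le
          omega
        rw [h2]
        exact_mod_cast haeq
      linarith
    have hE : (2*(p:ℤ)*(a:ℤ)+1)*(4*(m:ℤ)) = (p:ℤ)^3+(p:ℤ)^2-(p:ℤ)+3 := by
      have e1 : (2*(p:ℤ)*(a:ℤ)+1)*(4*(m:ℤ)) = 4*((k:ℤ)^2*((q:ℤ)+1)+(p:ℤ)) := by
        rw [hmz, ← haz]
        ring
      rw [e1, hqp, hpk]
      ring
    have hBeq : 4*(m:ℤ) =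
        2*(p:ℤ)*((k:ℤ)*((p:ℤ)+2) - (a:ℤ)*(4*(m:ℤ))) + ((p:ℤ)+3) := by
      linear_combination hE + ((p:ℤ)*((p:ℤ)+2))*hpk
    have hB0 : 0 ≤ (k:ℤ)*((p:ℤ)+2) - (a:ℤ)*(4*(m:ℤ)) := by
      by_contra h
      push_neg at h
      have h1 : (k:ℤ)*((p:ℤ)+2) - (a:ℤ)*(4*(m:ℤ)) ≤ -1 := by
        linarith [Int.add_one_le_iff.mpr h]
      have h2 : 2*(p:ℤ)*((k:ℤ)*((p:ℤ)+2) - (a:ℤ)*(4*(m:ℤ))) ≤ 2*(p:ℤ)*(-1) :=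
        mul_le_mul_of_nonneg_left h1 (by linarith)
      linarith [hBeq]
    exact DHcase1_aux (p:ℤ) (a:ℤ) _ hpz (by omega) (by exact_mod_cast ha1) hB0
      (by linear_combination hE - (2*(p:ℤ)*(a:ℤ)+1)*hBeq)
  · -- q ∣ r - 1
    have hq11 : q ≠ 11 := by
      rintro rfl
      have h9 : p = 9 := by omega
      rw [h9] at hp
      norm_num at hp
    have hq15 : q ≠ 15 := by
      rintro rfl
      norm_num at hq
    have hq17 : q ≠ 17 := by
      rintro rfl
      omega
    have hcop : Nat.Coprime 2 q := (Nat.prime_two.coprime_iff_not_dvd).mpr (by omega)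
    obtain ⟨a, haeq⟩ := hcop.mul_dvd_of_dvd_of_dvd h2dvd hcase
    have ha1 : 1 ≤ a := by
      rcases Nat.eq_zero_or_pos a with h | h
      · subst h
        simp at haeq
        omega
      · exact h
    have haz : (r:ℤ) = 2*(q:ℤ)*(a:ℤ)+1 := by
      have h1 : ((r:ℤ) - 1) = 2*(q:ℤ)*(a:ℤ) := by
        have h2 : (r : ℤ) - 1 = ((r - 1 : ℕ) : ℤ) := by
          have := hrp.one_lt.le
          omega
        rw [h2]
        exact_mod_cast haeq
      linarith
    have hE : (2*(q:ℤ)*(a:ℤ)+1)*(4*(m:ℤ)) = (q:ℤ)^3-5*(q:ℤ)^2+7*(q:ℤ)+1 := by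
      have e1 : (2*(q:ℤ)*(a:ℤ)+1)*(4*(m:ℤ)) = 4*((k:ℤ)^2*((q:ℤ)+1)+(p:ℤ)) := by
        rw [hmz, ← haz]
        ring
      rw [e1, hqp, hpk]
      ring
    have hBeq : 4*(m:ℤ) =
        2*(q:ℤ)*((k:ℤ)*((q:ℤ)-2) - (a:ℤ)*(4*(m:ℤ))) + ((q:ℤ)+1) := by
      linear_combination hE + ((q:ℤ)*((q:ℤ)-2))*hqp + ((q:ℤ)*((q:ℤ)-2))*hpk
    have hB0 : 0 ≤ (k:ℤ)*((q:ℤ)-2) - (a:ℤ)*(4*(m:ℤ)) := by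
      by_contra h
      push_neg at h
      have h1 : (k:ℤ)*((q:ℤ)-2) - (a:ℤ)*(4*(m:ℤ)) ≤ -1 := by
        linarith [Int.add_one_le_iff.mpr h]
      have h2 : 2*(q:ℤ)*((k:ℤ)*((q:ℤ)-2) - (a:ℤ)*(4*(m:ℤ))) ≤ 2*(q:ℤ)*(-1) :=
        mul_le_mul_of_nonneg_left h1 (by linarith [hqp])
      have hqz : (7:ℤ) ≤ (q:ℤ) := by exact_mod_cast hq7
      linarith [hBeq]
    have hqz : (7:ℤ) ≤ (q:ℤ) := by exact_mod_cast hq7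
    exact DHcase2_aux (q:ℤ) (a:ℤ) _ hqz (by omega) (by exact_mod_cast ha1) hB0
      (by exact_mod_cast hq11) (by exact_mod_cast hq15) (by exact_mod_cast hq17)
      (by linear_combination hE - (2*(q:ℤ)*(a:ℤ)+1)*hBeq)
end

section
/- Suppose in addition that p and q are twin primes with q = p + 2. Then for the second Ding–Helleseth sequence, gcd(S(2), 2^N − 1) = 1. -/
open Finset

/-!
Let `r` be a prime dividing both `S(2)` and `2^N - 1`. Then `r` is odd and `u ↦ 2^u` is an
additive character `ψ` of `ℤ/N` with values in `𝔽_r`; through the Chinese remainder theorem it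
splits as `ψ(u) = ψ_p(u mod p) ψ_q(u mod q)`. Since `D₁ ∪ Q` consists of the `u` with
`u mod p ≠ 0` and `χ(u mod q) ≠ 1`, `χ` the quadratic character mod `q`, the sum factors:
`S(2) ≡ A · B (mod r)` with `A = Σ_{a ≠ 0} ψ_p(a)` and `B = Σ_{χ(b) ≠ 1} ψ_q(b)`.

A nontrivial character of `ℤ/ℓ` into `𝔽_r` forces `ℓ ∣ r - 1`, hence `2ℓ + 1 ≤ r`, and
`ψ_p`, `ψ_q` are not both trivial because `ψ(1) = 2`. So `A` is `-1` or `p - 1`, never `0`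
mod `r`. If `ψ_q` is trivial, `B` is a count between `1` and `q < 2p + 1 ≤ r`. Otherwise `1 - 2B`
is the quadratic Gauss sum, whose square is `±q`, so `B = 0` would give `r ∣ q ∓ 1`, impossible
as `r ≥ 2q + 1`.
-/

lemma pow_eq_pow_of_modEq_orderOf {M : Type*} [Monoid M] {a : M} {n m : ℕ}
    (h : n ≡ m [MOD orderOf a]) : a ^ n = a ^ m := by
  rw [← pow_mod_orderOf, h, pow_mod_orderOf]

lemma natCast_ne_zero_of_pos_of_lt {m r : ℕ} (h0 : 0 < m) (hr : m < r) : (m : ZMod r) ≠ 0 := by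
  rw [Ne, ZMod.natCast_eq_zero_iff]
  exact Nat.not_dvd_of_pos_of_lt h0 hr

lemma exists_two_mul_add_modEq {a b : ℕ} (ha : a ≠ 0) (hb : b ≠ 0) (hgcd : Nat.gcd a b = 2)
    (k m : ℕ) : ∃ t < a * b / 4, ∃ i < 2, 2 * t + i ≡ k [MOD a] ∧ 2 * t ≡ 2 * m [MOD b] := by
  obtain ⟨a', rfl⟩ : 2 ∣ a := hgcd ▸ Nat.gcd_dvd_left _ _
  obtain ⟨b', rfl⟩ : 2 ∣ b := hgcd ▸ Nat.gcd_dvd_right _ _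
  have hco : a'.Coprime b' := by
    rw [Nat.gcd_mul_left] at hgcd
    exact Nat.Coprime.gcd_eq_one (by omega)
  let t := Nat.chineseRemainder hco (k / 2) m
  refine ⟨t, ?_, k % 2, Nat.mod_lt _ two_pos, ?_, t.2.2.mul_left' 2⟩
  · rw [show 2 * a' * (2 * b') = 4 * (a' * b') by ring, Nat.mul_div_cancel_left _ four_pos]
    exact Nat.chineseRemainder_lt_mul _ _ _ (by omega) (by omega)
  · calc 2 * t + k % 2 ≡ 2 * (k / 2) + k % 2 [MOD 2 * a'] := (t.2.1.mul_left' 2).add_right _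
      _ = k := Nat.div_add_mod k 2

section PrimitiveRoot

variable {p : ℕ} [Fact p.Prime] {g : ZMod p}

lemma ne_zero_of_orderOf_eq_sub_one (hg : orderOf g = p - 1) : g ≠ 0 := by
  rintro rfl
  rw [orderOf_eq_zero_iff'.2 fun n hn => by simp [hn.ne']] at hg
  have := (Fact.out : p.Prime).two_le
  omega

lemma exists_pow_eq_of_orderOf_eq_sub_one (hg : orderOf g = p - 1) {a : ZMod p} (ha : a ≠ 0) :
    ∃ k, g ^ k = a := by
  have : NeZero (p - 1) := ⟨by have := (Fact.out : p.Prime).two_le; omega⟩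
  obtain ⟨k, -, hk⟩ := (hg ▸ IsPrimitiveRoot.orderOf g).eq_pow_of_pow_eq_one
    (ZMod.pow_card_sub_one_eq_one ha)
  exact ⟨k, hk⟩

lemma quadraticChar_eq_neg_one_of_orderOf_eq_sub_one (hp2 : p ≠ 2) (hg : orderOf g = p - 1) :
    quadraticChar (ZMod p) g = -1 := by
  have hp := (Fact.out : p.Prime).two_le
  rw [quadraticChar_eq_pow_of_char_ne_two (by rwa [ZMod.ringChar_zmod_n])
    (ne_zero_of_orderOf_eq_sub_one hg), ZMod.card, if_neg]
  intro h
  have := Nat.le_of_dvd (Nat.div_pos hp two_pos) (hg ▸ orderOf_dvd_of_pow_eq_one h)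
  omega

end PrimitiveRoot

namespace AddChar

section CRT

variable {m n : ℕ} (h : m.Coprime n) {R : Type*}

def crtFst [CommMonoid R] (ψ : AddChar (ZMod (m * n)) R) : AddChar (ZMod m) R :=
  ψ.compAddMonoidHom ((ZMod.chineseRemainder h).symm.toAddMonoidHom.comp (AddMonoidHom.inl _ _))

def crtSnd [CommMonoid R] (ψ : AddChar (ZMod (m * n)) R) : AddChar (ZMod n) R :=
  ψ.compAddMonoidHom ((ZMod.chineseRemainder h).symm.toAddMonoidHom.comp (AddMonoidHom.inr _ _))

lemma crtFst_mul_crtSnd [CommMonoid R] (ψ : AddChar (ZMod (m * n)) R) (u : ZMod (m * n)) :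
    ψ.crtFst h (ZMod.chineseRemainder h u).1 * ψ.crtSnd h (ZMod.chineseRemainder h u).2 =
      ψ u := by
  simp only [crtFst, crtSnd, compAddMonoidHom_apply, AddMonoidHom.comp_apply,
    AddMonoidHom.inl_apply, AddMonoidHom.inr_apply, ← map_add_eq_mul, ← map_add,
    Prod.mk_add_mk, add_zero, zero_add]
  exact congrArg ψ ((ZMod.chineseRemainder h).symm_apply_apply u)

lemma sum_filter_chineseRemainder [NeZero m] [NeZero n] [CommSemiring R]
    (ψ : AddChar (ZMod (m * n)) R) (P : ZMod m → Prop) (Q : ZMod n → Prop) [DecidablePred P]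
    [DecidablePred Q] :
    ∑ u with P (ZMod.chineseRemainder h u).1 ∧ Q (ZMod.chineseRemainder h u).2, ψ u =
      (∑ a with P a, ψ.crtFst h a) * ∑ b with Q b, ψ.crtSnd h b := by
  rw [sum_mul_sum, ← sum_product']
  exact sum_equiv (ZMod.chineseRemainder h).toEquiv (by simp [mem_product])
    fun u _ => (crtFst_mul_crtSnd h ψ u).symm

end CRT

lemma sum_filter_ne_zero_eq_neg_one {A R : Type*} [AddGroup A] [Fintype A] [DecidableEq A]
    [CommRing R] [IsDomain R] {ψ : AddChar A R} (hψ : ψ ≠ 1) :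
    ∑ a with a ≠ 0, ψ a = -1 := by
  rw [filter_ne', sum_erase_eq_sub (mem_univ _), sum_eq_zero_of_ne_one hψ, map_zero_eq_one,
    zero_sub]

lemma two_mul_add_one_le_of_ne_one {n r : ℕ} [Fact n.Prime] [Fact r.Prime] (hn2 : n ≠ 2)
    (hr2 : r ≠ 2) {ψ : AddChar (ZMod n) (ZMod r)} (hψ : ψ ≠ 1) : 2 * n + 1 ≤ r := by
  have hn := (Fact.out : n.Prime)
  have hr := (Fact.out : r.Prime)
  have hζ1 : ψ 1 ≠ 1 := (zmod_char_ne_one_iff n ψ).1 hψ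
  have hζn : ψ 1 ^ n = 1 := by
    rw [← map_nsmul_eq_pow, nsmul_one, ZMod.natCast_self, map_zero_eq_one]
  have hζ0 : ψ 1 ≠ 0 := fun h0 => by simp [h0, hn.ne_zero] at hζn
  have hdvd : n ∣ r - 1 := orderOf_eq_prime hζn hζ1 ▸ ZMod.orderOf_dvd_card_sub_one hζ0
  have h2dvd : 2 * n ∣ r - 1 :=
    Nat.Coprime.mul_dvd_of_dvd_of_dvd ((Nat.coprime_two_left).2 (hn.odd_of_ne_two hn2))
      (Nat.Odd.sub_odd (hr.odd_of_ne_two hr2) odd_one).two_dvd hdvd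
  have := hr.two_le
  have := Nat.le_of_dvd (by omega) h2dvd
  omega

end AddChar

-- `1 - 2 Σ_{χ b ≠ 1} ψ b` is the Gauss sum of the quadratic character `χ`.
lemma one_sub_two_mul_sum_quadraticChar_ne_one_sq {F R : Type*} [Field F] [Fintype F]
    [DecidableEq F] [Field R] (hF : ringChar F ≠ 2) (hR : ringChar R ≠ 2) {ψ : AddChar F R}
    (hψ : ψ ≠ 1) :
    (1 - 2 * ∑ b with quadraticChar F b ≠ 1, ψ b) ^ 2 =
      quadraticChar F (-1) * Fintype.card F := by
  let χ := (quadraticChar F).ringHomComp (Int.castRingHom R)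
  have hχ : χ ≠ 1 := by
    obtain ⟨a, ha⟩ := quadraticChar_exists_neg_one' hF
    refine MulChar.ne_one_iff.mpr ⟨a, ?_⟩
    simpa [χ, ha] using Ring.neg_one_ne_one_of_char_ne_two hR
  have hpt : ∀ b, χ b * ψ b =
      ψ b - 2 * (if quadraticChar F b ≠ 1 then ψ b else 0) + if b = 0 then ψ b else 0 := by
    intro b
    by_cases hb : b = 0
    · norm_num [χ, hb]
    rcases quadraticChar_dichotomy hb with h | h <;> simp [χ, h, hb, two_mul]
  have hG : gaussSum χ ψ = 1 - 2 * ∑ b with quadraticChar F b ≠ 1, ψ b := by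
    rw [gaussSum, sum_congr rfl fun b _ => hpt b, sum_add_distrib, sum_sub_distrib, ← mul_sum,
      sum_ite_eq', ← sum_filter, AddChar.sum_eq_zero_of_ne_one hψ, if_pos (mem_univ _),
      AddChar.map_zero_eq_one]
    ring
  rw [← hG, gaussSum_sq hχ ((quadraticChar_isQuadratic F).comp _) (.of_ne_one hψ)]
  simp [χ]

section CharSums

variable {p q r : ℕ} [Fact p.Prime] [Fact q.Prime] [Fact r.Prime] (hco : p.Coprime q)
  {ψ : AddChar (ZMod (p * q)) (ZMod r)}

lemma crtFst_ne_one_or_crtSnd_ne_one (hψ : ψ 1 = 2) :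
    ψ.crtFst hco ≠ 1 ∨ ψ.crtSnd hco ≠ 1 := by
  by_contra! h
  have h1 := AddChar.crtFst_mul_crtSnd hco ψ 1
  rw [map_one, Prod.fst_one, Prod.snd_one, h.1, h.2, AddChar.one_apply, AddChar.one_apply,
    one_mul, hψ] at h1
  exact one_ne_zero (by linear_combination -h1 : (1 : ZMod r) = 0)

lemma sum_crtFst_ne_zero (hq2 : q ≠ 2) (hr2 : r ≠ 2) (hpq : p < q) (hψ : ψ 1 = 2) :
    ∑ a with a ≠ 0, ψ.crtFst hco a ≠ 0 := by
  by_cases h : ψ.crtFst hco = 1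
  · have := AddChar.two_mul_add_one_le_of_ne_one hq2 hr2
      ((crtFst_ne_one_or_crtSnd_ne_one hco hψ).resolve_left (not_not.2 h))
    have := (Fact.out : p.Prime).two_le
    rw [h]
    simp only [AddChar.one_apply, sum_const, nsmul_one, filter_ne', card_erase_of_mem (mem_univ _),
      card_univ, ZMod.card]
    exact natCast_ne_zero_of_pos_of_lt (by omega) (by omega)
  · rw [AddChar.sum_filter_ne_zero_eq_neg_one h]
    exact neg_ne_zero.2 one_ne_zero

lemma sum_crtSnd_ne_zero (hp2 : p ≠ 2) (hq2 : q ≠ 2) (hr2 : r ≠ 2) (hqp : q ≤ 2 * p)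
    (hψ : ψ 1 = 2) : ∑ b with quadraticChar (ZMod q) b ≠ 1, ψ.crtSnd hco b ≠ 0 := by
  by_cases h : ψ.crtSnd hco = 1
  · have := AddChar.two_mul_add_one_le_of_ne_one hp2 hr2
      ((crtFst_ne_one_or_crtSnd_ne_one hco hψ).resolve_right (not_not.2 h))
    rw [h]
    simp only [AddChar.one_apply, sum_const, nsmul_one]
    have hpos : 0 < #{b : ZMod q | quadraticChar (ZMod q) b ≠ 1} := card_pos.2 ⟨0, by simp⟩
    have hle := (card_filter_le univ fun b : ZMod q => quadraticChar (ZMod q) b ≠ 1).trans_eq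
      (by rw [card_univ, ZMod.card])
    exact natCast_ne_zero_of_pos_of_lt hpos (by omega)
  have := AddChar.two_mul_add_one_le_of_ne_one hq2 hr2 h
  have := (Fact.out : q.Prime).two_le
  intro hB
  have hsq := one_sub_two_mul_sum_quadraticChar_ne_one_sq (by rwa [ZMod.ringChar_zmod_n])
    (by rwa [ZMod.ringChar_zmod_n]) h
  rw [hB, ZMod.card] at hsq
  rcases quadraticChar_dichotomy (neg_ne_zero.2 (one_ne_zero' (ZMod q))) with h1 | h1
  · refine natCast_ne_zero_of_pos_of_lt (m := q - 1) (r := r) (by omega) (by omega) ?_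
    rw [h1] at hsq
    push_cast [Nat.cast_sub (Fact.out : q.Prime).one_le]
    linear_combination -hsq
  · refine natCast_ne_zero_of_pos_of_lt (m := q + 1) (r := r) (by omega) (by omega) ?_
    rw [h1] at hsq
    push_cast
    linear_combination hsq

end CharSums

lemma mem_DHQ_iff {p q : ℕ} [NeZero p] [NeZero q] (hco : p.Coprime q) (u : ZMod (p * q)) :
    u ∈ DHQ p q ↔
      (ZMod.chineseRemainder hco u).1 ≠ 0 ∧ (ZMod.chineseRemainder hco u).2 = 0 := by
  have hρ : ∀ v : ℕ, ZMod.chineseRemainder hco v = ((v : ZMod p), (v : ZMod q)) := fun v => by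
    rw [map_natCast]; exact Prod.ext (Prod.fst_natCast v) (Prod.snd_natCast v)
  rw [DHQ, mem_image]
  constructor
  · rintro ⟨k, hk, rfl⟩
    rw [mem_Icc] at hk
    rw [hρ, ne_eq, ZMod.natCast_eq_zero_iff, ZMod.natCast_eq_zero_iff]
    refine ⟨fun hdvd => ?_, dvd_mul_left q k⟩
    have := Nat.le_of_dvd (by omega) (hco.dvd_of_dvd_mul_right hdvd)
    omega
  rintro ⟨ha, hb⟩
  obtain ⟨v, hv, rfl⟩ : ∃ v < p * q, (v : ZMod (p * q)) = u :=
    ⟨u.val, ZMod.val_lt u, ZMod.natCast_zmod_val u⟩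
  rw [hρ, ne_eq, ZMod.natCast_eq_zero_iff] at ha
  rw [hρ, ZMod.natCast_eq_zero_iff] at hb
  obtain ⟨k, rfl⟩ := hb
  have hk0 : k ≠ 0 := by rintro rfl; simp at ha
  have hkp : k < p := Nat.lt_of_mul_lt_mul_left (mul_comm p q ▸ hv)
  exact ⟨k, mem_Icc.2 ⟨by omega, by omega⟩, by rw [mul_comm k]⟩

section CyclotomicClasses

variable {p q g x : ℕ} [Fact p.Prime] [Fact q.Prime] (hco : p.Coprime q)

lemma mem_DHD0_iff (hgcd : Nat.gcd (p - 1) (q - 1) = 2)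
    (hgp : orderOf (g : ZMod p) = p - 1) (hgq : orderOf (g : ZMod q) = q - 1)
    (hxp : (x : ZMod p) = g) (hxq : (x : ZMod q) = 1) (u : ZMod (p * q)) :
    u ∈ DHD0 p q g x ↔ (ZMod.chineseRemainder hco u).1 ≠ 0 ∧
      quadraticChar (ZMod q) (ZMod.chineseRemainder hco u).2 = 1 := by
  have hgp0 := ne_zero_of_orderOf_eq_sub_one hgp
  have hgq0 := ne_zero_of_orderOf_eq_sub_one hgq
  constructor
  · simp only [DHD0, mem_image]
    rintro ⟨⟨t, i⟩, -, rfl⟩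
    simp only [map_mul, map_pow, map_natCast, Prod.fst_mul, Prod.snd_mul, Prod.pow_fst,
      Prod.pow_snd, Prod.fst_natCast, Prod.snd_natCast, hxp, hxq, one_pow, mul_one]
    exact ⟨by simp [hgp0], by rw [pow_mul, quadraticChar_sq_one hgq0, one_pow]⟩
  rintro ⟨ha, hb⟩
  have hb0 : (ZMod.chineseRemainder hco u).2 ≠ 0 := fun h0 => by simp [h0] at hb
  obtain ⟨k, hk⟩ := exists_pow_eq_of_orderOf_eq_sub_one hgp ha
  obtain ⟨c, hc⟩ := (quadraticChar_one_iff_isSquare hb0).1 hb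
  obtain ⟨m, hm⟩ := exists_pow_eq_of_orderOf_eq_sub_one hgq
    (left_ne_zero_of_mul (hc ▸ hb0 : c * c ≠ 0))
  obtain ⟨t, ht, i, hi, htp, htq⟩ :=
    exists_two_mul_add_modEq (Nat.sub_ne_zero_of_lt (Fact.out : p.Prime).one_lt)
      (Nat.sub_ne_zero_of_lt (Fact.out : q.Prime).one_lt) hgcd k m
  refine mem_image.2 ⟨(t, i), mem_product.2 ⟨mem_range.2 ht, mem_range.2 hi⟩,
    (ZMod.chineseRemainder hco).injective (Prod.ext ?_ ?_)⟩
  · simp only [map_mul, map_pow, map_natCast, Prod.fst_mul, Prod.pow_fst, Prod.fst_natCast, hxp,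
      ← pow_add, ← hk]
    exact pow_eq_pow_of_modEq_orderOf (hgp ▸ htp)
  · simp only [map_mul, map_pow, map_natCast, Prod.snd_mul, Prod.pow_snd, Prod.snd_natCast, hxq,
      one_pow, mul_one, hc, ← hm, ← pow_add, ← two_mul]
    exact pow_eq_pow_of_modEq_orderOf (hgq ▸ htq)

lemma mem_DHD1_iff (hq2 : q ≠ 2) (hgcd : Nat.gcd (p - 1) (q - 1) = 2)
    (hgp : orderOf (g : ZMod p) = p - 1) (hgq : orderOf (g : ZMod q) = q - 1)
    (hxp : (x : ZMod p) = g) (hxq : (x : ZMod q) = 1) (u : ZMod (p * q)) :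
    u ∈ DHD1 p q g x ↔ (ZMod.chineseRemainder hco u).1 ≠ 0 ∧
      quadraticChar (ZMod q) (ZMod.chineseRemainder hco u).2 = -1 := by
  set ρ := ZMod.chineseRemainder hco
  have hχg := quadraticChar_eq_neg_one_of_orderOf_eq_sub_one hq2 hgq
  have hρg : ρ g = ((g : ZMod p), (g : ZMod q)) := by
    rw [map_natCast]; exact Prod.ext (Prod.fst_natCast g) (Prod.snd_natCast g)
  have hg : ∀ d, ρ (g * d) = ((g : ZMod p) * (ρ d).1, (g : ZMod q) * (ρ d).2) := by
    intro d
    rw [map_mul, hρg, Prod.mk_mul_mk]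
  rw [DHD1, mem_image]
  constructor
  · rintro ⟨d, hd, rfl⟩
    rw [mem_DHD0_iff hco hgcd hgp hgq hxp hxq] at hd
    rw [hg, map_mul, hχg, hd.2]
    exact ⟨mul_ne_zero (ne_zero_of_orderOf_eq_sub_one hgp) hd.1, by norm_num⟩
  rintro ⟨ha, hb⟩
  have hgp0 := ne_zero_of_orderOf_eq_sub_one hgp
  have hgq0 := ne_zero_of_orderOf_eq_sub_one hgq
  refine ⟨ρ.symm ((ρ g)⁻¹ * ρ u), ?_, ρ.injective ?_⟩
  · rw [mem_DHD0_iff hco hgcd hgp hgq hxp hxq, RingEquiv.apply_symm_apply, hρg]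
    refine ⟨mul_ne_zero (inv_ne_zero hgp0) ha, ?_⟩
    have h := congrArg (quadraticChar (ZMod q)) (mul_inv_cancel_left₀ hgq0 (ρ u).2)
    rw [map_mul, hχg, hb] at h
    simpa using h
  · rw [hg, RingEquiv.apply_symm_apply, hρg]
    simp [hgp0, hgq0]

lemma DHD1_union_DHQ_eq_filter (hq2 : q ≠ 2) (hgcd : Nat.gcd (p - 1) (q - 1) = 2)
    (hgp : orderOf (g : ZMod p) = p - 1) (hgq : orderOf (g : ZMod q) = q - 1)
    (hxp : (x : ZMod p) = g) (hxq : (x : ZMod q) = 1) :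
    DHD1 p q g x ∪ DHQ p q = univ.filter fun u => (ZMod.chineseRemainder hco u).1 ≠ 0 ∧
      quadraticChar (ZMod q) (ZMod.chineseRemainder hco u).2 ≠ 1 := by
  ext u
  rw [mem_union, mem_DHD1_iff hco hq2 hgcd hgp hgq hxp hxq, mem_DHQ_iff hco, mem_filter]
  by_cases hb : (ZMod.chineseRemainder hco u).2 = 0
  · simp [hb]
  rcases quadraticChar_dichotomy hb with h | h <;> simp [h, hb]

end CyclotomicClasses

lemma natCast_DHS2num2 {R : Type*} [CommSemiring R] (p q g x : ℕ) [NeZero (p * q)] :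
    (DHS2num2 p q g x : R) = ∑ u ∈ DHD1 p q g x ∪ DHQ p q, (2 : R) ^ u.val := by
  calc (DHS2num2 p q g x : R)
      = ∑ i ∈ range (p * q), if (i : ZMod (p * q)) ∈ DHD1 p q g x ∪ DHQ p q then (2 : R) ^ i
          else 0 := by
        simp only [DHS2num2, DHs2, Nat.cast_sum, Nat.cast_pow, Nat.cast_ite, Nat.cast_zero,
          Nat.cast_ofNat, ite_mul, one_mul, zero_mul]
    _ = ∑ u : ZMod (p * q), if u ∈ DHD1 p q g x ∪ DHQ p q then (2 : R) ^ u.val else 0 :=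
        sum_nbij' (fun i => (i : ZMod (p * q))) ZMod.val (by simp) (by simp [ZMod.val_lt])
          (fun i hi => ZMod.val_natCast_of_lt (mem_range.1 hi)) (by simp)
          (fun i hi => by rw [ZMod.val_natCast_of_lt (mem_range.1 hi)])
    _ = _ := by rw [sum_ite_mem, univ_inter]

lemma sum_DHD1_union_DHQ_ne_zero {p q g x r : ℕ} [Fact p.Prime] [Fact q.Prime] [Fact r.Prime]
    (hp2 : p ≠ 2) (hq2 : q ≠ 2) (hr2 : r ≠ 2) (hpq : p < q) (hqp : q ≤ 2 * p)
    (hgcd : Nat.gcd (p - 1) (q - 1) = 2)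
    (hgp : orderOf (g : ZMod p) = p - 1) (hgq : orderOf (g : ZMod q) = q - 1)
    (hxp : (x : ZMod p) = g) (hxq : (x : ZMod q) = 1)
    {ψ : AddChar (ZMod (p * q)) (ZMod r)} (hψ : ψ 1 = 2) :
    ∑ u ∈ DHD1 p q g x ∪ DHQ p q, ψ u ≠ 0 := by
  have hco : p.Coprime q := (Nat.coprime_primes Fact.out Fact.out).2 hpq.ne
  rw [DHD1_union_DHQ_eq_filter hco hq2 hgcd hgp hgq hxp hxq,
    AddChar.sum_filter_chineseRemainder hco ψ (· ≠ 0) (quadraticChar (ZMod q) · ≠ 1)]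
  exact mul_ne_zero (sum_crtFst_ne_zero hco hq2 hr2 hpq hψ)
    (sum_crtSnd_ne_zero hco hp2 hq2 hr2 hqp hψ)

theorem stmt19 (p q g x : ℕ) (hp : Nat.Prime p) (hq : Nat.Prime q)
    (hpo : Odd p) (hqo : Odd q) (hpq : p < q)
    (hgcd : Nat.gcd (p - 1) (q - 1) = 2)
    (hgp : orderOf (g : ZMod p) = p - 1) (hgq : orderOf (g : ZMod q) = q - 1)
    (hxp : (x : ZMod p) = (g : ZMod p)) (hxq : (x : ZMod q) = 1) (htwin : q = p + 2) :
    Nat.gcd (DHS2num2 p q g x) (2 ^ (p * q) - 1) = 1 := by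
  have := Fact.mk hp
  have := Fact.mk hq
  have hN : 1 < p * q := one_lt_mul_of_lt_of_le hp.one_lt hq.one_lt.le
  have : NeZero (p * q) := ⟨by omega⟩
  refine Nat.coprime_of_dvd fun r hr hrS hrM => ?_
  have := Fact.mk hr
  have hβ : (2 : ZMod r) ^ (p * q) = 1 := by
    have := (ZMod.natCast_eq_zero_iff _ r).2 hrM
    rwa [Nat.cast_sub Nat.one_le_two_pow, sub_eq_zero, Nat.cast_pow, Nat.cast_ofNat,
      Nat.cast_one] at this
  have hr2 : r ≠ 2 := by
    rintro rfl
    rw [show (2 : ZMod 2) = 0 from rfl, zero_pow (by omega)] at hβ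
    exact zero_ne_one hβ
  have hψ : AddChar.zmodChar (p * q) hβ 1 = 2 := by
    rw [AddChar.zmodChar_apply, ZMod.val_one'' hN.ne', pow_one]
  refine sum_DHD1_union_DHQ_ne_zero (hpo.ne_two_of_dvd_nat dvd_rfl) (hqo.ne_two_of_dvd_nat dvd_rfl)
    hr2 hpq (by have := hp.two_le; omega) hgcd hgp hgq hxp hxq hψ ?_
  rw [← (ZMod.natCast_eq_zero_iff _ r).2 hrS, natCast_DHS2num2]
  simp only [AddChar.zmodChar_apply]
end
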